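/- Let A, B be bounded linear operators on G such that Λ^{A,B} is a self-adjoint linear relation and the pair (A,B) is normalized, and let Q be a bounded linear operator on G. Define the linear relation gr Q − Λ^{A,B} := {(x, Qx − y) : (x,y) ∈ Λ^{A,B}}. Then the following are equivalent: (i) gr Q − Λ^{A,B} has trivial kernel (i.e. (x,0) ∈ gr Q − Λ^{A,B} implies x = 0) and its range {Qx − y : (x,y) ∈ Λ^{A,B}} is all of G; (ii) the operator Q B* − A* is boundedly invertible. Moreover, if these conditions hold, then the inverse relation {(Qx − y, x) : (x,y) ∈ Λ^{A,B}} equals the graph of the bounded operator B*(Q B* − A*)⁻¹. -/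

import Mathlib

open ContinuousLinearMap

variable {G : Type*} [NormedAddCommGroup G] [InnerProductSpace ℂ G] [CompleteSpace G]

/-- The operator `M^{A,B}` on `G × G`, `(x₁,x₂) ↦ (A x₁ - B x₂, B x₁ + A x₂)`. -/
noncomputable def MAB (A B : G →L[ℂ] G) : (G × G) →L[ℂ] (G × G) :=
  ((A.comp (fst ℂ G G)) - (B.comp (snd ℂ G G))).prod
    ((B.comp (fst ℂ G G)) + (A.comp (snd ℂ G G)))

/-- The linear relation `Λ^{A,B} = {(x₁,x₂) : A x₁ = B x₂}`. -/
def LambdaAB (A B : G →L[ℂ] G) : Submodule ℂ (G × G) where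
  carrier := {p | A p.1 = B p.2}
  add_mem' := by
    intro a b ha hb
    simp only [Set.mem_setOf_eq] at *
    simp [ha, hb]
  zero_mem' := by simp
  smul_mem' := by
    intro c p hp
    simp only [Set.mem_setOf_eq] at *
    simp [hp]

/-- The adjoint of a linear relation. -/
def relAdjoint (Λ : Submodule ℂ (G × G)) : Submodule ℂ (G × G) where
  carrier := {p | ∀ q ∈ Λ, (inner ℂ p.1 q.2 : ℂ) = inner ℂ p.2 q.1}
  add_mem' := by
    intro a b ha hb q hq
    simp [inner_add_left, ha q hq, hb q hq]
  zero_mem' := by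
    intro q hq; simp
  smul_mem' := by
    intro c p hp q hq
    simp [inner_smul_left, hp q hq]

/-- A linear relation is self-adjoint if it equals its adjoint. -/
def IsSelfAdjointRel (Λ : Submodule ℂ (G × G)) : Prop := relAdjoint Λ = Λ

/-- A bounded operator is boundedly invertible if it has a bounded two-sided inverse. -/
def IsBoundedlyInvertible {E F : Type*} [NormedAddCommGroup E] [NormedSpace ℂ E]
    [NormedAddCommGroup F] [NormedSpace ℂ F] (T : E →L[ℂ] F) : Prop :=
  ∃ T' : F →L[ℂ] E, (∀ x, T' (T x) = x) ∧ (∀ y, T (T' y) = y)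

/-- The pair `(A,B)` is normalized if `A B* = B A*` and `M^{A,B}` is boundedly invertible. -/
noncomputable def IsNormalized (A B : G →L[ℂ] G) : Prop :=
  A ∘L adjoint B = B ∘L adjoint A ∧ IsBoundedlyInvertible (MAB A B)

/-!
Normalization makes `Λ^{A,B}` the range of the injective map `g ↦ (B* g, A* g)`. A bounded right
inverse of `M^{A,B}` bounds `‖g‖` by `‖A* g‖ + ‖B* g‖`; hence `AA* + BB*` is coercive and so
invertible, and for `p ∈ Λ^{A,B}` the solution `g` of `(AA* + BB*) g = B p₁ + A p₂` satisfies
`M^{A,B} (B* g, A* g) = M^{A,B} p`. In this parametrization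
`gr Q − Λ^{A,B} = {(B* g, (QB* − A*) g)}`, so trivial kernel and full range amount to bijectivity
of `QB* − A*`, which the open mapping theorem turns into bounded invertibility.
-/

section Normalized

variable {A B : G →L[ℂ] G}

theorem norm_le_of_MAB_rightInverse {M' : (G × G) →L[ℂ] (G × G)}
    (hM' : ∀ y, MAB A B (M' y) = y) (g : G) :
    ‖g‖ ≤ ‖M'‖ * (‖adjoint A g‖ + ‖adjoint B g‖) := by
  set x := M' (g, 0)
  have hx : A x.1 - B x.2 = g := congrArg Prod.fst (hM' (g, 0))
  have hx_norm : ‖x‖ ≤ ‖M'‖ * ‖g‖ := by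
    simpa [Prod.norm_def] using M'.le_opNorm (g, 0)
  have key : ‖g‖ * ‖g‖ ≤ ‖M'‖ * (‖adjoint A g‖ + ‖adjoint B g‖) * ‖g‖ :=
    calc ‖g‖ * ‖g‖ = ‖(inner ℂ g (A x.1 - B x.2) : ℂ)‖ := by
          simp [hx, inner_self_eq_norm_sq_to_K, sq]
      _ = ‖(inner ℂ (adjoint A g) x.1 - inner ℂ (adjoint B g) x.2 : ℂ)‖ := by
          rw [inner_sub_right, adjoint_inner_left, adjoint_inner_left]
      _ ≤ ‖adjoint A g‖ * ‖x.1‖ + ‖adjoint B g‖ * ‖x.2‖ :=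
          (norm_sub_le _ _).trans (add_le_add (norm_inner_le_norm _ _) (norm_inner_le_norm _ _))
      _ ≤ ‖adjoint A g‖ * (‖M'‖ * ‖g‖) + ‖adjoint B g‖ * (‖M'‖ * ‖g‖) := by
          gcongr
          exacts [(norm_fst_le x).trans hx_norm, (norm_snd_le x).trans hx_norm]
      _ = ‖M'‖ * (‖adjoint A g‖ + ‖adjoint B g‖) * ‖g‖ := by ring
  rcases (norm_nonneg g).eq_or_lt with hg | hg
  · rw [← hg]; positivity
  · exact le_of_mul_le_mul_right key hg

theorem eq_zero_of_adjoint_eq_zero {M' : (G × G) →L[ℂ] (G × G)}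
    (hM' : ∀ y, MAB A B (M' y) = y) {g : G} (hA : adjoint A g = 0) (hB : adjoint B g = 0) :
    g = 0 := by
  simpa [hA, hB] using norm_le_of_MAB_rightInverse hM' g

theorem isUnit_comp_adjoint_add_comp_adjoint {M' : (G × G) →L[ℂ] (G × G)}
    (hM' : ∀ y, MAB A B (M' y) = y) : IsUnit (A ∘L adjoint A + B ∘L adjoint B) := by
  refine isUnit_of_forall_le_norm_inner_map _ (c := (2 * ‖M'‖₊ ^ 2 + 1)⁻¹) (by positivity)
    fun g => ?_
  have hinner : ‖(inner ℂ ((A ∘L adjoint A + B ∘L adjoint B) g) g : ℂ)‖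
      = ‖adjoint A g‖ ^ 2 + ‖adjoint B g‖ ^ 2 := by
    simp only [add_apply, comp_apply, inner_add_left, ← adjoint_inner_right,
      inner_self_eq_norm_sq_to_K]
    norm_cast
    exact Real.norm_of_nonneg (by positivity)
  have hbound := norm_le_of_MAB_rightInverse hM' g
  rw [hinner, NNReal.coe_inv, ← div_eq_mul_inv, div_le_iff₀ (by positivity)]
  push_cast
  nlinarith [sq_nonneg (‖adjoint A g‖ - ‖adjoint B g‖), norm_nonneg g,
    mul_self_le_mul_self (norm_nonneg g) hbound]

theorem IsNormalized.mem_LambdaAB_iff (hAB : IsNormalized A B) {p : G × G} :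
    p ∈ LambdaAB A B ↔ ∃ g, (adjoint B g, adjoint A g) = p := by
  obtain ⟨hcomm, M', hM'M, hMM'⟩ := hAB
  have hcomm' (g : G) : A (adjoint B g) = B (adjoint A g) := congrArg (· g) hcomm
  refine ⟨fun hp => ?_, by rintro ⟨g, rfl⟩; exact hcomm' g⟩
  obtain ⟨g, hg⟩ := (isUnit_iff_bijective.mp (isUnit_comp_adjoint_add_comp_adjoint hMM')).2
    (B p.1 + A p.2)
  refine ⟨g, ?_⟩
  -- both sides have the same image `(0, B p.1 + A p.2)` under the injective map `M^{A,B}`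
  have hM : MAB A B (adjoint B g, adjoint A g) = MAB A B p :=
    Prod.ext (by simp [MAB, hcomm', show A p.1 = B p.2 from hp])
      (by simpa [MAB, add_comm] using hg)
  simpa [hM'M] using congrArg M' hM

theorem IsNormalized.exists_mem_LambdaAB_iff (hAB : IsNormalized A B) {P : G × G → Prop} :
    (∃ p ∈ LambdaAB A B, P p) ↔ ∃ g, P (adjoint B g, adjoint A g) := by
  simp only [hAB.mem_LambdaAB_iff]
  exact ⟨fun ⟨_, ⟨g, hg⟩, hP⟩ => ⟨g, hg ▸ hP⟩, fun ⟨g, hP⟩ => ⟨_, ⟨g, rfl⟩, hP⟩⟩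

end Normalized

theorem isBoundedlyInvertible_iff_bijective {E F : Type*} [NormedAddCommGroup E]
    [NormedSpace ℂ E] [CompleteSpace E] [NormedAddCommGroup F] [NormedSpace ℂ F] [CompleteSpace F]
    {T : E →L[ℂ] F} : IsBoundedlyInvertible T ↔ Function.Bijective T := by
  refine ⟨fun ⟨T', hT'T, hTT'⟩ => ⟨Function.LeftInverse.injective hT'T, fun y => ⟨T' y, hTT' y⟩⟩,
    fun hT => ?_⟩
  let e := ContinuousLinearEquiv.ofBijective T (LinearMap.ker_eq_bot.mpr hT.1)
    (LinearMap.range_eq_top.mpr hT.2)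
  exact ⟨e.symm, e.symm_apply_apply, e.apply_symm_apply⟩

theorem grQ_sub_lambda_inverse (A B Q : G →L[ℂ] G)
    (hnorm : IsNormalized A B) :
    (((∀ x : G, (x, Q x) ∈ LambdaAB A B → x = 0) ∧
        (∀ g : G, ∃ p : G × G, p ∈ LambdaAB A B ∧ Q p.1 - p.2 = g)) ↔
      IsBoundedlyInvertible (Q ∘L adjoint B - adjoint A)) ∧
    (∀ T' : G →L[ℂ] G,
      (∀ x : G, T' ((Q ∘L adjoint B - adjoint A) x) = x) →
      (∀ y : G, (Q ∘L adjoint B - adjoint A) (T' y) = y) →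
      {q : G × G | ∃ p ∈ LambdaAB A B, q = (Q p.1 - p.2, p.1)} =
        {q : G × G | q.2 = adjoint B (T' q.1)}) := by
  obtain ⟨-, M', -, hMM'⟩ := id hnorm
  set T := Q ∘L adjoint B - adjoint A
  have hT (g : G) : T g = Q (adjoint B g) - adjoint A g := rfl
  have h_ker : (∀ x, (x, Q x) ∈ LambdaAB A B → x = 0) ↔ Function.Injective T := by
    rw [injective_iff_map_eq_zero]
    refine ⟨fun hker g hg => ?_, fun hinj x hx => ?_⟩
    · have hQ : Q (adjoint B g) = adjoint A g := sub_eq_zero.mp hg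
      have hB : adjoint B g = 0 := hker _ (hnorm.mem_LambdaAB_iff.2 ⟨g, by rw [hQ]⟩)
      exact eq_zero_of_adjoint_eq_zero hMM' (by rw [← hQ, hB, map_zero]) hB
    · obtain ⟨g, hg⟩ := hnorm.mem_LambdaAB_iff.1 hx
      obtain ⟨rfl, hQ⟩ := Prod.ext_iff.1 hg
      dsimp only at hQ
      rw [hinj g (by rw [hT, hQ, sub_self]), map_zero]
  have h_range : (∀ h, ∃ p : G × G, p ∈ LambdaAB A B ∧ Q p.1 - p.2 = h) ↔
      Function.Surjective T :=
    forall_congr' fun h => hnorm.exists_mem_LambdaAB_iff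
  refine ⟨by rw [h_ker, h_range, isBoundedlyInvertible_iff_bijective]; rfl,
    fun T' hT'T hTT' => Set.ext fun q => ?_⟩
  simp only [Set.mem_ofPred_eq, hnorm.exists_mem_LambdaAB_iff]
  refine ⟨?_, fun hq => ⟨T' q.1, Prod.ext (hTT' q.1).symm hq⟩⟩
  rintro ⟨g, rfl⟩
  simp only [← hT, hT'T]
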